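/- If (u_n) is a positive sequence whose weighted geometric means converge to a > 0, and (u_n) is *-slowly oscillating (liminf_{λ→1⁺} limsup_{n→∞} max_{n<m≤λ_n} |u_m/u_n|* = 1), then u_n → a. -/

import Mathlib

open Filter

noncomputable def mulAbs (x : ℝ) : ℝ := if 1 ≤ x then x else x⁻¹

noncomputable def Psum (p : ℕ → ℝ) (n : ℕ) : ℝ := ∑ k ∈ Finset.range (n + 1), p k

noncomputable def wgm (p u : ℕ → ℝ) (n : ℕ) : ℝ :=
  (∏ k ∈ Finset.range (n + 1), u k ^ p k) ^ (1 / Psum p n)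

def SVA (p : ℕ → ℝ) : Prop :=
  ∀ l : ℝ, 0 < l → l ≠ 1 →
    0 < liminf (fun n : ℕ => |Psum p ⌊l * (n : ℝ)⌋₊ / Psum p n - 1|) atTop

def StarSlowlyOscillating (u : ℕ → ℝ) : Prop :=
  liminf (fun l : ℝ =>
      limsup (fun n : ℕ =>
          sSup ((fun m => mulAbs (u m / u n)) '' Set.Ioc n ⌊l * (n : ℝ)⌋₊)) atTop)
    (nhdsWithin 1 (Set.Ioi 1)) = 1

/-!
Taking logarithms turns the weighted geometric means of `u` into the weighted arithmetic means
`t = wam p v` of `v = log u`, with `t n → b = log a`, and turns `*`-slow oscillation into ordinary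
slow oscillation of `v`. With `P = Psum p` and `m = ⌊λ n⌋`, the block identity
`(P m - P n) (v n - b) = P m (t m - b) - P n (t n - b) - ∑_{n < k ≤ m} p k (v k - v n)`
bounds `|v n - b|`: slow oscillation makes the last sum small compared with `P m - P n`, and the
SVA condition keeps `P m` within a constant factor of `P m - P n`.
-/

open Finset Topology

lemma Real.limsup_nonneg_of_nonneg {α : Type*} {f : Filter α} [NeBot f] {u : α → ℝ}
    (h : ∀ x, 0 ≤ u x) : 0 ≤ limsup u f := by
  rw [limsup_eq]
  rcases Set.eq_empty_or_nonempty {a : ℝ | ∀ᶠ x in f, u x ≤ a} with he | _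
  · rw [he, Real.sInf_empty]
  · exact Real.sInf_nonneg fun a ha => (h _).trans ha.exists.choose_spec

/- An unbounded real `limsup`/`liminf` takes the junk value `0`, so a nonzero one certifies
boundedness. -/
lemma Real.isCoboundedUnder_ge_of_liminf_ne_zero {α : Type*} {f : Filter α} {u : α → ℝ}
    (h : liminf u f ≠ 0) : IsCoboundedUnder (· ≥ ·) f u := by
  contrapose! h
  exact liminf_eq.trans (Real.sSup_of_not_bddAbove fun ⟨b, hb⟩ => h ⟨b, fun _ ha => hb ha⟩)

lemma Real.isBoundedUnder_le_of_limsup_ne_zero {α : Type*} {f : Filter α} {u : α → ℝ}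
    (h : limsup u f ≠ 0) : IsBoundedUnder (· ≤ ·) f u := by
  contrapose! h
  have hempty : {a : ℝ | ∀ᶠ x in f, u x ≤ a} = ∅ :=
    Set.eq_empty_of_forall_notMem fun a ha => h ⟨a, ha⟩
  rw [limsup_eq, hempty, Real.sInf_empty]

lemma mulAbs_eq_exp_abs_log {x : ℝ} (hx : 0 < x) : mulAbs x = Real.exp |Real.log x| := by
  unfold mulAbs
  split_ifs with h
  · rw [abs_of_nonneg (Real.log_nonneg h), Real.exp_log hx]
  · rw [abs_of_neg (Real.log_neg hx (not_le.1 h)), Real.exp_neg, Real.exp_log hx]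

lemma mulAbs_div_eq_exp_abs_log_sub {x y : ℝ} (hx : 0 < x) (hy : 0 < y) :
    mulAbs (x / y) = Real.exp |Real.log x - Real.log y| := by
  rw [mulAbs_eq_exp_abs_log (div_pos hx hy), Real.log_div hx.ne' hy.ne']

lemma Finset.sum_Ioc_eq_sum_range_sub {M : Type*} [AddCommGroup M] (f : ℕ → M) {n m : ℕ}
    (h : n ≤ m) :
    ∑ k ∈ Ioc n m, f k = ∑ k ∈ range (m + 1), f k - ∑ k ∈ range (n + 1), f k := by
  rw [← Ico_add_one_add_one_eq_Ioc, sum_Ico_eq_sub f (by omega)]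

lemma Psum_pos {p : ℕ → ℝ} (hp : ∀ n, 0 ≤ p n) (hp0 : 0 < p 0) (n : ℕ) : 0 < Psum p n :=
  hp0.trans_le (single_le_sum (fun k _ => hp k) (mem_range.2 n.succ_pos))

lemma Psum_mono {p : ℕ → ℝ} (hp : ∀ n, 0 ≤ p n) : Monotone (Psum p) := fun _ _ h =>
  sum_le_sum_of_subset_of_nonneg (range_subset_range.2 (Nat.succ_le_succ h)) fun k _ _ => hp k

lemma sum_Ioc_eq_Psum_sub (p : ℕ → ℝ) {n m : ℕ} (h : n ≤ m) :
    ∑ k ∈ Ioc n m, p k = Psum p m - Psum p n :=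
  sum_Ioc_eq_sum_range_sub p h

noncomputable def wam (p v : ℕ → ℝ) (n : ℕ) : ℝ :=
  (∑ k ∈ range (n + 1), p k * v k) / Psum p n

lemma wgm_eq_exp_wam {p u : ℕ → ℝ} (hu : ∀ n, 0 < u n) (n : ℕ) :
    wgm p u n = Real.exp (wam p (fun k => Real.log (u k)) n) := by
  have hprod : ∏ k ∈ range (n + 1), u k ^ p k
      = Real.exp (∑ k ∈ range (n + 1), p k * Real.log (u k)) := by
    rw [Real.exp_sum]
    exact prod_congr rfl fun k _ => by rw [Real.rpow_def_of_pos (hu k), mul_comm]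
  rw [wgm, wam, hprod, Real.rpow_def_of_pos (Real.exp_pos _), Real.log_exp, mul_one_div]

lemma Psum_sub_mul_sub_eq {p v : ℕ → ℝ} {n m : ℕ} (hnm : n ≤ m) (hn : Psum p n ≠ 0)
    (hm : Psum p m ≠ 0) (b : ℝ) :
    (Psum p m - Psum p n) * (v n - b) =
      Psum p m * (wam p v m - b) - Psum p n * (wam p v n - b)
        - ∑ k ∈ Ioc n m, p k * (v k - v n) := by
  simp only [wam, mul_sub, mul_div_cancel₀ _ hm, mul_div_cancel₀ _ hn, sum_sub_distrib,
    ← sum_mul, sum_Ioc_eq_sum_range_sub _ hnm]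
  unfold Psum
  ring

lemma abs_sub_le_of_block {p v : ℕ → ℝ} {n m : ℕ} {b C δ η : ℝ} (hp : ∀ k, 0 ≤ p k)
    (hp0 : 0 < p 0) (hnm : n ≤ m) (hC : Psum p m ≤ C * (Psum p m - Psum p n))
    (hm : |wam p v m - b| ≤ δ) (hn : |wam p v n - b| ≤ δ)
    (hosc : ∀ k ∈ Ioc n m, |v k - v n| ≤ η) :
    |v n - b| ≤ 2 * C * δ + η := by
  set Pn := Psum p n
  set Pm := Psum p m
  have hPn : 0 < Pn := Psum_pos hp hp0 n
  have hPm : 0 < Pm := Psum_pos hp hp0 m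
  have hPnm : Pn ≤ Pm := Psum_mono hp hnm
  have hD : 0 < Pm - Pn := by
    rcases hPnm.lt_or_eq with h | h
    · exact sub_pos.2 h
    · rw [h, sub_self, mul_zero] at hC; linarith
  have hδ : 0 ≤ δ := (abs_nonneg _).trans hm
  have hsum : |∑ k ∈ Ioc n m, p k * (v k - v n)| ≤ (Pm - Pn) * η :=
    calc |∑ k ∈ Ioc n m, p k * (v k - v n)|
        ≤ ∑ k ∈ Ioc n m, p k * η := by
          refine (abs_sum_le_sum_abs _ _).trans (sum_le_sum fun k hk => ?_)
          rw [abs_mul, abs_of_nonneg (hp k)]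
          exact mul_le_mul_of_nonneg_left (hosc k hk) (hp k)
      _ = (Pm - Pn) * η := by rw [← sum_mul, sum_Ioc_eq_Psum_sub p hnm]
  have hblock : (Pm - Pn) * |v n - b| ≤ (Pm - Pn) * (2 * C * δ + η) :=
    calc (Pm - Pn) * |v n - b|
        = |Pm * (wam p v m - b) - Pn * (wam p v n - b) - ∑ k ∈ Ioc n m, p k * (v k - v n)| := by
          rw [← Psum_sub_mul_sub_eq hnm hPn.ne' hPm.ne', abs_mul, abs_of_pos hD]
      _ ≤ Pm * δ + Pn * δ + (Pm - Pn) * η := by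
          refine (abs_sub _ _).trans (add_le_add ((abs_sub _ _).trans (add_le_add ?_ ?_)) hsum)
          · rw [abs_mul, abs_of_pos hPm]; exact mul_le_mul_of_nonneg_left hm hPm.le
          · rw [abs_mul, abs_of_pos hPn]; exact mul_le_mul_of_nonneg_left hn hPn.le
      _ ≤ (Pm - Pn) * (2 * C * δ + η) := by nlinarith
  exact le_of_mul_le_mul_left hblock hD

lemma le_floor_mul_of_one_le {l : ℝ} (hl : 1 ≤ l) (n : ℕ) : n ≤ ⌊l * n⌋₊ :=
  Nat.le_floor (le_mul_of_one_le_left n.cast_nonneg hl)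

lemma SVA.exists_eventually_Psum_floor_le {p : ℕ → ℝ} (hSVA : SVA p) (hp : ∀ n, 0 ≤ p n)
    (hp0 : 0 < p 0) {l : ℝ} (hl : 1 < l) :
    ∃ C > 0, ∀ᶠ n : ℕ in atTop, Psum p ⌊l * n⌋₊ ≤ C * (Psum p ⌊l * n⌋₊ - Psum p n) := by
  have hc := hSVA l (by linarith) hl.ne'
  set c := liminf (fun n : ℕ => |Psum p ⌊l * (n : ℝ)⌋₊ / Psum p n - 1|) atTop
  refine ⟨1 + 2 / c, by positivity, ?_⟩
  filter_upwards [eventually_lt_of_lt_liminf (half_lt_self hc)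
    (isBoundedUnder_of ⟨0, fun n => abs_nonneg _⟩)] with n hn
  have hPn := Psum_pos hp hp0 n
  have hPnm := Psum_mono hp (le_floor_mul_of_one_le hl.le n)
  rw [abs_of_nonneg (sub_nonneg.2 ((one_le_div hPn).2 hPnm)), lt_sub_iff_add_lt,
    lt_div_iff₀ hPn] at hn
  -- `P m - P n > (c / 2) P n`, hence `P m = (P m - P n) + P n < (1 + 2 / c) (P m - P n)`.
  have h2c : 2 / c * c = 2 := div_mul_cancel₀ 2 hc.ne'
  nlinarith [mul_lt_mul_of_pos_left hn (by positivity : 0 < 2 / c)]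

lemma StarSlowlyOscillating.exists_eventually_abs_log_sub_le {u : ℕ → ℝ}
    (hso : StarSlowlyOscillating u) (hu : ∀ n, 0 < u n) {ε : ℝ} (hε : 0 < ε) :
    ∃ l > (1 : ℝ), ∀ᶠ n : ℕ in atTop, ∀ k ∈ Ioc n ⌊l * n⌋₊,
      |Real.log (u k) - Real.log (u n)| ≤ ε := by
  set S : ℝ → ℕ → ℝ := fun l n =>
    sSup ((fun m => mulAbs (u m / u n)) '' Set.Ioc n ⌊l * (n : ℝ)⌋₊)
  have hso' : liminf (fun l => limsup (S l) atTop) (𝓝[>] 1) = 1 := hso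
  have hF : ∀ l, 0 ≤ limsup (S l) atTop := fun l =>
    Real.limsup_nonneg_of_nonneg fun n => Real.sSup_nonneg <| by
      rintro _ ⟨m, _, rfl⟩
      dsimp only
      rw [mulAbs_div_eq_exp_abs_log_sub (hu m) (hu n)]
      exact (Real.exp_pos _).le
  have hsmall : ∃ᶠ l in 𝓝[>] 1, limsup (S l) atTop < Real.exp ε :=
    frequently_lt_of_liminf_lt
      (Real.isCoboundedUnder_ge_of_liminf_ne_zero (by rw [hso']; exact one_ne_zero))
      (by rw [hso']; exact Real.one_lt_exp_iff.2 hε)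
  have hpos : ∀ᶠ l in 𝓝[>] 1, 0 < limsup (S l) atTop :=
    eventually_lt_of_lt_liminf (by rw [hso']; exact one_pos) (isBoundedUnder_of ⟨0, hF⟩)
  obtain ⟨l, hlε, hl0, hl1⟩ :=
    (hsmall.and_eventually (hpos.and self_mem_nhdsWithin)).exists
  refine ⟨l, hl1, ?_⟩
  filter_upwards [eventually_lt_of_limsup_lt hlε
    (Real.isBoundedUnder_le_of_limsup_ne_zero hl0.ne')] with n hn k hk
  have hk_le : mulAbs (u k / u n) ≤ S l n :=
    le_csSup ((Set.finite_Ioc _ _).image _).bddAbove ⟨k, by simpa using hk, rfl⟩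
  rw [mulAbs_div_eq_exp_abs_log_sub (hu k) (hu n)] at hk_le
  exact Real.exp_le_exp.1 (hk_le.trans hn.le)

theorem tendsto_of_tendsto_wam {p v : ℕ → ℝ} {b : ℝ} (hp : ∀ n, 0 ≤ p n) (hp0 : 0 < p 0)
    (hSVA : SVA p) (hv : Tendsto (wam p v) atTop (𝓝 b))
    (hosc : ∀ ε > 0, ∃ l > (1 : ℝ), ∀ᶠ n : ℕ in atTop, ∀ k ∈ Ioc n ⌊l * n⌋₊, |v k - v n| ≤ ε) :
    Tendsto v atTop (𝓝 b) := by
  refine Metric.tendsto_nhds.2 fun ε hε => ?_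
  obtain ⟨l, hl, hosc⟩ := hosc (ε / 4) (by positivity)
  obtain ⟨C, hC, hPC⟩ := hSVA.exists_eventually_Psum_floor_le hp hp0 hl
  have hδ : ∀ᶠ n in atTop, |wam p v n - b| ≤ ε / (8 * C) :=
    (Metric.tendsto_nhds.1 hv _ (by positivity)).mono fun n hn => hn.le
  have hfloor : Tendsto (fun n : ℕ => ⌊l * n⌋₊) atTop atTop :=
    tendsto_nat_floor_atTop.comp
      (tendsto_natCast_atTop_atTop.const_mul_atTop (by linarith))
  filter_upwards [hosc, hPC, hδ, hfloor.eventually hδ] with n hosc hPC hn hm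
  have hC8 : 2 * C * (ε / (8 * C)) = ε / 4 := by field_simp; ring
  calc dist (v n) b ≤ 2 * C * (ε / (8 * C)) + ε / 4 :=
        abs_sub_le_of_block hp hp0 (le_floor_mul_of_one_le hl.le n) hPC hm hn hosc
    _ < ε := by linarith

theorem slowly_oscillating_tauberian_general (p u : ℕ → ℝ) (a : ℝ)
    (hp : ∀ n, 0 ≤ p n) (hp0 : 0 < p 0)
    (hSVA : SVA p)
    (hu : ∀ n, 0 < u n) (ha : 0 < a)
    (hw : Tendsto (wgm p u) atTop (nhds a))
    (hso : StarSlowlyOscillating u) :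
    Tendsto u atTop (nhds a) := by
  have hlog : Tendsto (wam p fun n => Real.log (u n)) atTop (𝓝 (Real.log a)) := by
    simpa only [wgm_eq_exp_wam hu, Real.log_exp] using hw.log ha.ne'
  have hv := tendsto_of_tendsto_wam hp hp0 hSVA hlog fun ε hε =>
    hso.exists_eventually_abs_log_sub_le hu hε
  simpa only [Real.exp_log (hu _), Real.exp_log ha] using hv.rexp

theorem slowly_oscillating_tauberian (p u : ℕ → ℝ) (a : ℝ)
    (hp : ∀ n, 0 ≤ p n) (hp0 : 0 < p 0)
    (hP : Tendsto (Psum p) atTop atTop) (hSVA : SVA p)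
    (hu : ∀ n, 0 < u n) (ha : 0 < a)
    (hw : Tendsto (wgm p u) atTop (nhds a))
    (hso : StarSlowlyOscillating u) :
    Tendsto u atTop (nhds a) :=
  slowly_oscillating_tauberian_general p u a hp hp0 hSVA hu ha hw hso
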